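/- arXiv:2312.01419 — 2 statements merged into one kernel-verified Lean document; each statement's English description precedes it below -/
import Mathlib

section
/- Let G be a tournament. Then the number of copies of the transitive tournament T_4 in G equals the sum over all edges (u,v) of G of binom(d⁺(u,v), 2). -/
/-- A tournament: a directed graph in which, for every pair of distinct vertices,
exactly one of the two possible directed edges is present, and there are no loops. -/
def IsTournament {V : Type*} (r : V → V → Prop) : Prop :=
  (∀ v, ¬ r v v) ∧ ∀ u v : V, u ≠ v → (r u v ↔ ¬ r v u)

/-- The number of copies of the tournament `t` (on vertex type `W`) in the tournament `r`
(on vertex type `V`): the number of vertex subsets of `V` whose induced subtournament is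
isomorphic to `t`. -/
noncomputable def CopyCount {V W : Type*} (r : V → V → Prop) (t : W → W → Prop) : ℕ :=
  Nat.card {s : Set V // ∃ e : W ≃ s, ∀ i j : W, t i j ↔ r (e i) (e j)}

/-! A copy of `T₄` is the range of exactly one map `f : Fin 4 → V` with `r (f i) (f j)` for all
`i < j`: such a map is automatically an embedding because a tournament is asymmetric, and two
embeddings with the same range differ by an automorphism of `(Fin 4, <)`, which is trivial. Such
an `f` amounts to an edge `f 0 → f 1` together with an edge `f 2 → f 3` among the common
out-neighbours of `f 0` and `f 1`, and a tournament on `n` vertices has `n.choose 2` edges. -/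

open Function

section Tournament

variable {V : Type*} {r : V → V → Prop}

theorem IsTournament.asymm (hr : IsTournament r) {u v : V} (h : r u v) : ¬ r v u :=
  (hr.2 u v fun huv => hr.1 u (huv ▸ h)).1 h

theorem IsTournament.comap {W : Type*} (hr : IsTournament r) {f : W → V} (hf : Injective f) :
    IsTournament fun x y => r (f x) (f y) :=
  ⟨fun x => hr.1 (f x), fun _ _ hxy => hr.2 _ _ (hf.ne hxy)⟩

noncomputable def IsTournament.edgeEquivSym2 (hr : IsTournament r) :
    {p : V × V // r p.1 p.2} ≃ {z : Sym2 V // ¬ z.IsDiag} := by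
  refine Equiv.ofBijective
    (fun p => ⟨s(p.1.1, p.1.2), Sym2.mk_isDiag_iff.not.2 fun h => hr.1 _ (h ▸ p.2)⟩) ⟨?_, ?_⟩
  · rintro ⟨⟨a, b⟩, hab⟩ ⟨⟨a', b'⟩, hab'⟩ h
    obtain ⟨rfl, rfl⟩ | ⟨rfl, rfl⟩ := Sym2.eq_iff.1 (congrArg Subtype.val h)
    · rfl
    · exact (hr.asymm hab hab').elim
  · rintro ⟨z, hz⟩
    induction z using Sym2.ind with
    | h a b =>
      have hab : a ≠ b := Sym2.mk_isDiag_iff.not.1 hz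
      by_cases h : r a b
      · exact ⟨⟨(a, b), h⟩, rfl⟩
      · exact ⟨⟨(b, a), not_not.1 ((hr.2 a b hab).not.1 h)⟩, Subtype.ext Sym2.eq_swap⟩

theorem IsTournament.card_edges [Finite V] (hr : IsTournament r) :
    Nat.card {p : V × V // r p.1 p.2} = (Nat.card V).choose 2 := by
  classical
  have := Fintype.ofFinite V
  rw [Nat.card_congr hr.edgeEquivSym2, Nat.card_eq_fintype_card, Sym2.card_subtype_not_diag,
    Nat.card_eq_fintype_card]

end Tournament

instance {α : Type*} [LinearOrder α] [WellFoundedLT α] :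
    Subsingleton (((· < ·) : α → α → Prop) ≃r ((· < ·) : α → α → Prop)) :=
  ⟨fun f g => RelIso.ext fun x => DFunLike.congr_fun
    (Subsingleton.elim (OrderIso.ofRelIsoLT f) (OrderIso.ofRelIsoLT g)) x⟩

theorem copyCount_eq_card_relEmbedding {V W : Type*} (r : V → V → Prop) (t : W → W → Prop)
    [Subsingleton (t ≃r t)] : CopyCount r t = Nat.card (t ↪r r) := by
  refine (Nat.card_congr (Equiv.ofBijective (fun f : t ↪r r =>
    ⟨Set.range f, Equiv.ofInjective f f.injective, fun _ _ => f.map_rel_iff.symm⟩) ⟨?_, ?_⟩)).symm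
  · intro f g hfg
    have hrange : Set.range f = Set.range g := congrArg Subtype.val hfg
    let σ : W ≃ W := (Equiv.ofInjective f f.injective).trans
      ((Equiv.setCongr hrange).trans (Equiv.ofInjective g g.injective).symm)
    have hgσ : ∀ i, g (σ i) = f i := fun _ => Equiv.apply_ofInjective_symm g.injective _
    let σt : t ≃r t := ⟨σ, fun {i j} => by rw [← g.map_rel_iff, hgσ, hgσ, f.map_rel_iff]⟩
    have hσ : ∀ i, σ i = i := DFunLike.congr_fun (Subsingleton.elim σt (RelIso.refl t))
    exact RelEmbedding.ext fun i => by rw [← hgσ, hσ]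
  · rintro ⟨s, e, he⟩
    refine ⟨⟨e.toEmbedding.trans (Embedding.subtype _), fun {i j} => (he i j).symm⟩,
      Subtype.ext ?_⟩
    change Set.range (Subtype.val ∘ e) = s
    rw [Set.range_comp, e.range_eq_univ, Set.image_univ, Subtype.range_coe]

def RelEmbedding.equivRelHom {α β : Type*} (r : α → α → Prop) (s : β → β → Prop)
    [Std.Trichotomous r] [Std.Asymm s] : (r ↪r s) ≃ (r →r s) where
  toFun f := f.toRelHom
  invFun f := RelEmbedding.ofMonotone f fun _ _ => f.map_rel
  left_inv _ := RelEmbedding.ext fun _ => rfl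
  right_inv _ := RelHom.ext fun _ => rfl

def relHomFinFourEquiv {V : Type*} (r : V → V → Prop) :
    ((· < ·) : Fin 4 → Fin 4 → Prop) →r r ≃
      Σ e : {p : V × V // r p.1 p.2},
        {q : {w // r e.1.1 w ∧ r e.1.2 w} × {w // r e.1.1 w ∧ r e.1.2 w} // r q.1 q.2} where
  toFun f := ⟨⟨(f 0, f 1), f.map_rel (by decide)⟩,
    ⟨(⟨f 2, f.map_rel (by decide), f.map_rel (by decide)⟩,
      ⟨f 3, f.map_rel (by decide), f.map_rel (by decide)⟩), f.map_rel (by decide)⟩⟩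
  invFun x := by
    obtain ⟨⟨⟨a, b⟩, hab⟩, ⟨⟨⟨c, hac, hbc⟩, ⟨d, had, hbd⟩⟩, hcd⟩⟩ := x
    refine ⟨![a, b, c, d], fun {i j} hij => ?_⟩
    fin_cases i <;> fin_cases j <;> first | exact absurd hij (by decide) | assumption
  left_inv f := RelHom.ext fun i => by fin_cases i <;> rfl
  right_inv := fun ⟨⟨⟨_, _⟩, _⟩, ⟨⟨⟨_, _, _⟩, ⟨_, _, _⟩⟩, _⟩⟩ => rfl

/-- In a tournament `G`, the number of copies of the transitive tournament `T₄` equals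
`∑_{(u,v) ∈ E(G)} C(d⁺(u,v), 2)`, where `d⁺(u,v)` is the number of common out-neighbors
of `u` and `v`. -/
theorem stmt_13 {V : Type*} [Fintype V] (r : V → V → Prop) [DecidableRel r]
    (hr : IsTournament r) :
    CopyCount r (fun i j : Fin 4 => i < j) =
      ∑ u : V, ∑ v : V,
        if r u v then (Nat.card {w : V // r u w ∧ r v w}).choose 2 else 0 := by
  have : Std.Asymm r := ⟨fun _ _ => hr.asymm⟩
  rw [copyCount_eq_card_relEmbedding,
    Nat.card_congr ((RelEmbedding.equivRelHom _ r).trans (relHomFinFourEquiv r)), Nat.card_sigma,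
    Finset.sum_congr rfl fun e _ =>
      (hr.comap (Subtype.val_injective (p := fun w => r e.1.1 w ∧ r e.1.2 w))).card_edges,
    ← Finset.sum_subtype (Finset.univ.filter fun p : V × V => r p.1 p.2) (fun _ => by simp)
      (fun p => (Nat.card {w // r p.1 w ∧ r p.2 w}).choose 2), Finset.sum_filter,
    Fintype.sum_prod_type]
end

section
/- Let T be a tournament on five distinct vertices a, b, c, d, e whose edges include (e,a), (e,b), (c,e), (d,e), (a,c), (a,d), (b,c), (b,d), and let T' be a tournament on five distinct vertices a', b', c', d', e' whose edges include (e',a'), (e',b'), (c',e'), (d',e'), (a',c'), (a',d'), (b',c'), (b',d'). Then T and T' are isomorphic (regardless of the orientations of the edges between a and b and between c and d, and between a' and b' and between c' and d'). Moreover, in such a tournament, e is the only vertex having exactly two out-neighbors and exactly two in-neighbors such that both out-neighbors dominate both in-neighbors. -/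
open Function

namespace IsTournament

variable {V W : Type*} {r s : V → V → Prop}

lemma asymm_s18 (hr : IsTournament r) {u v : V} (h : r u v) : ¬ r v u :=
  (hr.2 u v fun huv => hr.1 u (huv ▸ h)).mp h

lemma of_not (hr : IsTournament r) {u v : V} (huv : u ≠ v) (h : ¬ r u v) : r v u :=
  (hr.2 v u huv.symm).mpr h

lemma comap_s18 (hr : IsTournament r) {f : W → V} (hf : Injective f) :
    IsTournament fun u v => r (f u) (f v) :=
  ⟨fun v => hr.1 (f v), fun u v huv => hr.2 (f u) (f v) (hf.ne huv)⟩

lemma iff_of_le (hr : IsTournament r) (hs : IsTournament s) (hle : ∀ u v, s u v → r u v)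
    (u v : V) : r u v ↔ s u v := by
  refine ⟨fun h => ?_, hle u v⟩
  by_contra hs'
  have huv : u ≠ v := fun huv => hr.1 u (huv ▸ h)
  exact hr.asymm_s18 h (hle v u (hs.of_not huv hs'))

end IsTournament

section Pivot

variable {V W : Type*}

def IsPivot (r : V → V → Prop) (v : V) : Prop :=
  Nat.card {w // r v w} = 2 ∧ Nat.card {w // r w v} = 2 ∧ ∀ x y, r v x → r y v → r x y

lemma RelIso.isPivot_iff {r : V → V → Prop} {s : W → W → Prop} (f : r ≃r s) (v : V) :
    IsPivot s (f v) ↔ IsPivot r v := by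
  have hout : Nat.card {w // s (f v) w} = Nat.card {w // r v w} :=
    Nat.card_congr (f.toEquiv.subtypeEquiv fun w => f.map_rel_iff.symm).symm
  have hin : Nat.card {w // s w (f v)} = Nat.card {w // r w v} :=
    Nat.card_congr (f.toEquiv.subtypeEquiv fun w => (f.map_rel_iff (a := w) (b := v)).symm).symm
  have hdom : (∀ x y, s (f v) x → s y (f v) → s x y) ↔ ∀ x y, r v x → r y v → r x y := by
    simp only [f.surjective.forall, f.map_rel_iff]
  rw [IsPivot, IsPivot, hout, hin, hdom]

end Pivot

/-- The tournament of the statement with `a, b, c, d, e = 0, 1, 2, 3, 4`, `a → b` and `c → d`. -/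
def modelEdges : List (Fin 5 × Fin 5) :=
  [(4, 0), (4, 1), (2, 4), (3, 4), (0, 2), (0, 3), (1, 2), (1, 3), (0, 1), (2, 3)]

def model (u v : Fin 5) : Prop := (u, v) ∈ modelEdges

instance : DecidableRel model := fun u v => inferInstanceAs (Decidable ((u, v) ∈ modelEdges))

lemma isTournament_model : IsTournament model := by
  unfold IsTournament; decide

lemma isPivot_model_iff (v : Fin 5) : IsPivot model v ↔ v = 4 := by
  revert v
  simp only [IsPivot, Nat.card_eq_fintype_card]
  decide

lemma exists_relIso_model {V : Type*} [Fintype V] (hV : Fintype.card V = 5)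
    (a b c d e : V) (hdist : [a, b, c, d, e].Nodup)
    (t : V → V → Prop) (ht : IsTournament t)
    (h1 : t e a) (h2 : t e b) (h3 : t c e) (h4 : t d e)
    (h5 : t a c) (h6 : t a d) (h7 : t b c) (h8 : t b d) :
    ∃ g : model ≃r t, g 4 = e := by
  wlog hab : t a b generalizing a b
  · have hdist' : [b, a, c, d, e].Nodup := (List.Perm.swap b a _).nodup_iff.mp hdist
    exact this b a hdist' h2 h1 h7 h8 h5 h6 (ht.of_not (by rintro rfl; simp at hdist) hab)
  wlog hcd : t c d generalizing c d
  · have hdist' : [a, b, d, c, e].Nodup :=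
      (((List.Perm.swap d c _).cons b).cons a).nodup_iff.mp hdist
    exact this d c h4 h3 hdist' h6 h5 h8 h7 (ht.of_not (by rintro rfl; simp at hdist) hcd)
  have hinj : Injective ![a, b, c, d, e] := List.nodup_ofFn.mp hdist
  let σ : Fin 5 ≃ V :=
    .ofBijective _ ((Fintype.bijective_iff_injective_and_card _).mpr ⟨hinj, by simp [hV]⟩)
  have hedges : ∀ p ∈ modelEdges, t (σ p.1) (σ p.2) := by
    simp only [modelEdges, List.forall_mem_cons, List.not_mem_nil, IsEmpty.forall_iff,
      implies_true, and_true]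
    exact ⟨h1, h2, h3, h4, h5, h6, h7, h8, hab, hcd⟩
  exact ⟨⟨σ, fun {i j} => (ht.comap_s18 σ.injective).iff_of_le isTournament_model
    (fun i j h => hedges (i, j) h) i j⟩, rfl⟩

/-- Let `T` be a tournament on five distinct vertices `a, b, c, d, e` with edges
including `(e,a), (e,b), (c,e), (d,e), (a,c), (a,d), (b,c), (b,d)`, and let `T'` be a
tournament on five distinct vertices `a', …, e'` with the corresponding edges.  Then
`T ≅ T'` (regardless of the orientations of the edges between `a,b` and between `c,d`).
Moreover, in such a tournament `e` is the only vertex having exactly two out-neighbors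
and exactly two in-neighbors such that both out-neighbors dominate both in-neighbors. -/
theorem stmt_18 {V V' : Type*} [Fintype V] [Fintype V']
    (hV : Fintype.card V = 5) (hV' : Fintype.card V' = 5)
    (a b c d e : V) (hdist : List.Pairwise (· ≠ ·) [a, b, c, d, e])
    (a' b' c' d' e' : V') (hdist' : List.Pairwise (· ≠ ·) [a', b', c', d', e'])
    (t : V → V → Prop) (ht : IsTournament t)
    (t' : V' → V' → Prop) (ht' : IsTournament t')
    (h1 : t e a) (h2 : t e b) (h3 : t c e) (h4 : t d e)
    (h5 : t a c) (h6 : t a d) (h7 : t b c) (h8 : t b d)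
    (h1' : t' e' a') (h2' : t' e' b') (h3' : t' c' e') (h4' : t' d' e')
    (h5' : t' a' c') (h6' : t' a' d') (h7' : t' b' c') (h8' : t' b' d') :
    (∃ f : V ≃ V', ∀ u v : V, t u v ↔ t' (f u) (f v)) ∧
    (∀ v : V,
      (Nat.card {w : V // t v w} = 2 ∧ Nat.card {w : V // t w v} = 2 ∧
        ∀ x y : V, t v x → t y v → t x y) ↔ v = e) := by
  obtain ⟨g, hg⟩ := exists_relIso_model hV a b c d e hdist t ht h1 h2 h3 h4 h5 h6 h7 h8
  obtain ⟨g', -⟩ :=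
    exists_relIso_model hV' a' b' c' d' e' hdist' t' ht' h1' h2' h3' h4' h5' h6' h7' h8'
  refine ⟨⟨(g.symm.trans g').toEquiv, fun u v => (g.symm.trans g').map_rel_iff.symm⟩, fun v => ?_⟩
  change IsPivot t v ↔ v = e
  rw [← g.apply_symm_apply v, g.isPivot_iff, isPivot_model_iff, ← hg, g.injective.eq_iff]
end
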